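/- Let ν := gaussianReal 0 1 be the standard Gaussian measure on ℝ, let μ ∈ ℝ, let f : ℝ → ℝ be differentiable with derivative f', and fix ρ₀ ∈ ℝ and δ > 0. Assume: (i) for every ρ with |ρ − ρ₀| < δ, the map ε ↦ f(μ + log(1 + exp(ρ))·ε) is ν-integrable; (ii) there is a ν-integrable function g with |f'(μ + log(1 + exp(ρ))·ε) · ε| ≤ g(ε) for all ρ with |ρ − ρ₀| < δ and ν-almost every ε. Then the function ρ ↦ ∫ f(μ + log(1 + exp(ρ))·ε) dν(ε) has derivative ∫ f'(μ + log(1 + exp(ρ₀))·ε) · ε / (1 + exp(−ρ₀)) dν(ε) at ρ₀. -/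

import Mathlib

/-!
Differentiate under the integral sign: for each `ε` the chain rule gives
`∂/∂ρ f(μ + s ρ · ε) = f'(μ + s ρ · ε) · ε · s'(ρ)`, and when the scale `s` has bounded derivative
the assumed domination of `f'(μ + s ρ · ε) · ε` dominates this uniformly near `ρ₀`. For the softplus
scale `s ρ = log (1 + exp ρ)` the derivative is the logistic sigmoid `(1 + exp (-ρ))⁻¹ ∈ (0, 1]`.
-/

open MeasureTheory ProbabilityTheory Real

theorem hasDerivAt_log_one_add_exp (ρ : ℝ) :
    HasDerivAt (fun ρ => log (1 + exp ρ)) (1 + exp (-ρ))⁻¹ ρ := by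
  have hpos : 0 < 1 + exp ρ := by positivity
  convert ((hasDerivAt_exp ρ).const_add 1).log hpos.ne' using 1
  rw [exp_neg]
  field_simp
  ring

theorem abs_inv_one_add_exp_neg_le_one (ρ : ℝ) : |(1 + exp (-ρ))⁻¹| ≤ 1 := by
  rw [abs_inv, abs_of_pos (by positivity)]
  exact inv_le_one_of_one_le₀ (by linarith [exp_pos (-ρ)])

theorem hasDerivAt_integral_comp_location_scale {ν : Measure ℝ} {f f' s s' g : ℝ → ℝ}
    {U : Set ℝ} {μ ρ₀ C : ℝ} (hf : ∀ x, HasDerivAt f (f' x) x) (hU : U ∈ nhds ρ₀)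
    (hs : ∀ ρ ∈ U, HasDerivAt s (s' ρ) ρ) (hs' : ∀ ρ ∈ U, |s' ρ| ≤ C)
    (h_int : Integrable (fun ε => f (μ + s ρ₀ * ε)) ν) (hg : Integrable g ν)
    (h_dom : ∀ᵐ ε ∂ν, ∀ ρ ∈ U, |f' (μ + s ρ * ε) * ε| ≤ g ε) :
    HasDerivAt (fun ρ => ∫ ε, f (μ + s ρ * ε) ∂ν)
      (∫ ε, f' (μ + s ρ₀ * ε) * ε * s' ρ₀ ∂ν) ρ₀ := by
  have hf_meas : Measurable f :=
    (continuous_iff_continuousAt.2 fun x => (hf x).continuousAt).measurable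
  have hf'_meas : Measurable f' := by
    rw [show f' = deriv f from funext fun x => (hf x).deriv.symm]
    exact measurable_deriv f
  have h_affine : ∀ ρ, Measurable fun ε : ℝ => μ + s ρ * ε := fun ρ => by fun_prop
  refine (hasDerivAt_integral_of_dominated_loc_of_deriv_le (F := fun ρ ε => f (μ + s ρ * ε))
    (F' := fun ρ ε => f' (μ + s ρ * ε) * ε * s' ρ) (bound := fun ε => g ε * C) hU
    (Filter.Eventually.of_forall fun ρ => (hf_meas.comp (h_affine ρ)).aestronglyMeasurable)
    h_int ?_ ?_ (hg.mul_const C) ?_).2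
  · exact ((hf'_meas.comp (h_affine ρ₀)).mul measurable_id).mul_const _ |>.aestronglyMeasurable
  · filter_upwards [h_dom] with ε hε ρ hρ
    rw [norm_eq_abs, abs_mul]
    exact mul_le_mul (hε ρ hρ) (hs' ρ hρ) (abs_nonneg _) ((abs_nonneg _).trans (hε ρ hρ))
  · filter_upwards with ε ρ hρ
    exact ((hf _).comp ρ (((hs ρ hρ).mul_const ε).const_add μ)).congr_deriv (by ring)

/-- **Gradient with respect to the standard-deviation parameter `ρ`.**  With
standard Gaussian noise `ε ∼ N(0,1)` and weight sample
`w = μ + log(1 + exp ρ)·ε`, under integrability and a dominated-derivative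
condition, `ρ ↦ E_ε[f(μ + log(1 + exp ρ)·ε)]` has derivative
`E_ε[f'(μ + log(1 + exp ρ₀)·ε) · ε / (1 + exp(−ρ₀))]` at `ρ₀`. -/
theorem deriv_rho_of_gaussian_expectation
    (μ : ℝ) (f f' : ℝ → ℝ)
    (hf : ∀ x, HasDerivAt f (f' x) x)
    (ρ₀ δ : ℝ) (hδ : 0 < δ)
    (h_int : ∀ ρ : ℝ, |ρ - ρ₀| < δ →
      Integrable (fun ε => f (μ + Real.log (1 + Real.exp ρ) * ε)) (gaussianReal 0 1))
    (g : ℝ → ℝ) (hg : Integrable g (gaussianReal 0 1))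
    (h_dom : ∀ᵐ ε ∂(gaussianReal 0 1), ∀ ρ : ℝ, |ρ - ρ₀| < δ →
      |f' (μ + Real.log (1 + Real.exp ρ) * ε) * ε| ≤ g ε) :
    HasDerivAt
      (fun ρ => ∫ ε, f (μ + Real.log (1 + Real.exp ρ) * ε) ∂(gaussianReal 0 1))
      (∫ ε, f' (μ + Real.log (1 + Real.exp ρ₀) * ε) * ε / (1 + Real.exp (-ρ₀))
        ∂(gaussianReal 0 1)) ρ₀ := by
  have h_ball : ∀ ρ, ρ ∈ Metric.ball ρ₀ δ → |ρ - ρ₀| < δ := fun ρ hρ => by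
    rwa [Metric.mem_ball, dist_eq] at hρ
  simpa only [div_eq_mul_inv] using
    hasDerivAt_integral_comp_location_scale hf (Metric.ball_mem_nhds ρ₀ hδ)
      (fun ρ _ => hasDerivAt_log_one_add_exp ρ) (fun ρ _ => abs_inv_one_add_exp_neg_le_one ρ)
      (h_int ρ₀ (by simpa using hδ)) hg
      (h_dom.mono fun ε hε ρ hρ => hε ρ (h_ball ρ hρ))
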